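/- arXiv:1902.11260 — 2 statements merged into one kernel-verified Lean document; each statement's English description precedes it below -/
import Mathlib

section
/- A set G ⊆ A_n is an n-gaussoid if and only if for every k with 3 ≤ k ≤ n, every k-minor of G is a k-gaussoid. In particular, G is a gaussoid if and only if all its 3-minors (one for each 3-face of the n-cube) are 3-gaussoids. -/
/-!
Every gaussoid axiom involves only the squares of a single 3-face `({i,j,k} | L)` of the cube,
and these are exactly the squares of the 3-minor of `G` on that face. Conversely, the axioms of
a minor on `(L | M)` are instances of the axioms of `G` with `M` adjoined to the conditioning set.
-/

abbrev Sq (n : ℕ) := Finset (Fin n) × Finset (Fin n)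

/-- `G` is a gaussoid on the cube with axis set `V ⊆ [n]`. -/
def IsGaussoidOn {n : ℕ} (V : Finset (Fin n)) (G : Set (Sq n)) : Prop :=
  (∀ x ∈ G, x.1.card = 2 ∧ Disjoint x.1 x.2 ∧ x.1 ∪ x.2 ⊆ V) ∧
  ∀ i j k : Fin n, ∀ L : Finset (Fin n),
    i ∈ V → j ∈ V → k ∈ V → L ⊆ V →
    i ≠ j → i ≠ k → j ≠ k → i ∉ L → j ∉ L → k ∉ L →
    ((({i,j}, L) ∈ G ∧ ({i,k}, insert j L) ∈ G →
        ({i,k}, L) ∈ G ∧ ({i,j}, insert k L) ∈ G) ∧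
     (({i,j}, insert k L) ∈ G ∧ ({i,k}, insert j L) ∈ G →
        ({i,j}, L) ∈ G ∧ ({i,k}, L) ∈ G) ∧
     (({i,j}, L) ∈ G ∧ ({i,k}, L) ∈ G →
        ({i,j}, insert k L) ∈ G ∧ ({i,k}, insert j L) ∈ G) ∧
     (({i,j}, L) ∈ G ∧ ({i,j}, insert k L) ∈ G →
        ({i,k}, L) ∈ G ∨ ({j,k}, L) ∈ G))

/-- The `(L|M)`-minor of a set of squares `G`. -/
def minor {n : ℕ} (G : Set (Sq n)) (L M : Finset (Fin n)) : Set (Sq n) :=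
  {x | x.1 ∪ x.2 ⊆ L ∧ (x.1, x.2 ∪ M) ∈ G}

variable {n : ℕ}

lemma pair_mem_minor_iff {G : Set (Sq n)} {L M S : Finset (Fin n)} {p q : Fin n}
    (hp : p ∈ L) (hq : q ∈ L) (hS : S ⊆ L) :
    ({p, q}, S) ∈ minor G L M ↔ ({p, q}, S ∪ M) ∈ G := by
  simp only [minor, Set.mem_ofPred_eq, and_iff_right_iff_imp]
  exact fun _ => Finset.union_subset (Finset.insert_subset hp (Finset.singleton_subset_iff.2 hq)) hS

lemma IsGaussoidOn.minor {V L M : Finset (Fin n)} {G : Set (Sq n)} (hG : IsGaussoidOn V G)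
    (hLV : L ⊆ V) (hMV : M ⊆ V) (hLM : Disjoint L M) :
    IsGaussoidOn L (minor G L M) := by
  obtain ⟨hwf, hax⟩ := hG
  constructor
  · rintro ⟨a, b⟩ ⟨hsub, hmem⟩
    obtain ⟨hcard, hdisj, -⟩ := hwf _ hmem
    exact ⟨hcard, (Finset.disjoint_union_right.mp hdisj).1, hsub⟩
  · intro i j k K hi hj hk hK hij hik hjk hiK hjK hkK
    have hnotin : ∀ x ∈ L, x ∉ K → x ∉ K ∪ M := fun x hx hxK =>
      Finset.notMem_union.2 ⟨hxK, Finset.disjoint_left.mp hLM hx⟩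
    have := hax i j k (K ∪ M) (hLV hi) (hLV hj) (hLV hk)
      (Finset.union_subset (hK.trans hLV) hMV) hij hik hjk
      (hnotin i hi hiK) (hnotin j hj hjK) (hnotin k hk hkK)
    rw [pair_mem_minor_iff hi hj hK, pair_mem_minor_iff hi hk hK, pair_mem_minor_iff hj hk hK,
      pair_mem_minor_iff hi hj (Finset.insert_subset hk hK),
      pair_mem_minor_iff hi hk (Finset.insert_subset hj hK)]
    simpa only [Finset.insert_union] using this

lemma isGaussoidOn_univ_of_three_minors {G : Set (Sq n)}
    (hwf : ∀ x ∈ G, x.1.card = 2 ∧ Disjoint x.1 x.2)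
    (h : ∀ L M : Finset (Fin n), Disjoint L M → L.card = 3 → IsGaussoidOn L (minor G L M)) :
    IsGaussoidOn Finset.univ G := by
  refine ⟨fun x hx => ⟨(hwf x hx).1, (hwf x hx).2, Finset.subset_univ _⟩, ?_⟩
  intro i j k K _ _ _ _ hij hik hjk hiK hjK hkK
  have hdisj : Disjoint ({i, j, k} : Finset (Fin n)) K := by
    simp only [Finset.disjoint_insert_left, Finset.disjoint_singleton_left]
    exact ⟨hiK, hjK, hkK⟩
  have hcard : ({i, j, k} : Finset (Fin n)).card = 3 :=
    Finset.card_eq_three.2 ⟨i, j, k, hij, hik, hjk, rfl⟩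
  obtain ⟨-, hax⟩ := h {i, j, k} K hdisj hcard
  have hi : i ∈ ({i, j, k} : Finset (Fin n)) := by simp
  have hj : j ∈ ({i, j, k} : Finset (Fin n)) := by simp
  have hk : k ∈ ({i, j, k} : Finset (Fin n)) := by simp
  have := hax i j k ∅ hi hj hk (Finset.empty_subset _) hij hik hjk
    (Finset.notMem_empty _) (Finset.notMem_empty _) (Finset.notMem_empty _)
  rw [pair_mem_minor_iff hi hj (Finset.empty_subset _),
    pair_mem_minor_iff hi hk (Finset.empty_subset _),
    pair_mem_minor_iff hj hk (Finset.empty_subset _),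
    pair_mem_minor_iff hi hj (Finset.insert_subset hk (Finset.empty_subset _)),
    pair_mem_minor_iff hi hk (Finset.insert_subset hj (Finset.empty_subset _))] at this
  simpa only [Finset.insert_union, Finset.empty_union] using this

theorem stmt_4_general (n : ℕ) (G : Set (Sq n))
    (hwf : ∀ x ∈ G, x.1.card = 2 ∧ Disjoint x.1 x.2) :
    (IsGaussoidOn Finset.univ G ↔
      ∀ k, 3 ≤ k → k ≤ n → ∀ L M : Finset (Fin n), Disjoint L M → L.card = k →
        IsGaussoidOn L (minor G L M)) ∧
    (IsGaussoidOn Finset.univ G ↔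
      ∀ L M : Finset (Fin n), Disjoint L M → L.card = 3 →
        IsGaussoidOn L (minor G L M)) := by
  have minors_of_gaussoid (hG : IsGaussoidOn Finset.univ G) (L M : Finset (Fin n))
      (hLM : Disjoint L M) : IsGaussoidOn L (minor G L M) :=
    hG.minor (Finset.subset_univ L) (Finset.subset_univ M) hLM
  have three_minors : IsGaussoidOn Finset.univ G ↔
      ∀ L M : Finset (Fin n), Disjoint L M → L.card = 3 → IsGaussoidOn L (minor G L M) :=
    ⟨fun hG L M hLM _ => minors_of_gaussoid hG L M hLM, isGaussoidOn_univ_of_three_minors hwf⟩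
  refine ⟨⟨fun hG _ _ _ L M hLM _ => minors_of_gaussoid hG L M hLM, fun h => ?_⟩,
    three_minors⟩
  refine three_minors.2 fun L M hLM hL => h 3 le_rfl ?_ L M hLM hL
  simpa [hL] using Finset.card_le_univ L

/-- A set `G` of squares of the `n`-cube is an `n`-gaussoid iff for every
`3 ≤ k ≤ n` all its `k`-minors are `k`-gaussoids; in particular iff all of
its `3`-minors are `3`-gaussoids. -/
theorem stmt_4 (n : ℕ) (hn : 3 ≤ n) (G : Set (Sq n))
    (hwf : ∀ x ∈ G, x.1.card = 2 ∧ Disjoint x.1 x.2) :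
    (IsGaussoidOn Finset.univ G ↔
      ∀ k, 3 ≤ k → k ≤ n → ∀ L M : Finset (Fin n), Disjoint L M → L.card = k →
        IsGaussoidOn L (minor G L M)) ∧
    (IsGaussoidOn Finset.univ G ↔
      ∀ L M : Finset (Fin n), Disjoint L M → L.card = 3 →
        IsGaussoidOn L (minor G L M)) :=
  stmt_4_general n G hwf
end

section
/- Let D, F be k-faces of the n-cube, j = |I_D ∩ I_F| the number of shared star-coordinates, and m the number of coordinates outside I_D ∪ I_F where D and F differ. Define ρ_q(D,F) = m + 2q - min{q,j}. Then D and F are adjacent in Q(n,k,p,q) if and only if ρ_q(D,F) ≤ p. -/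
/-- The dimension of a face of the `n`-cube: a face is an element of
`{0,1,*}^n ≅ (Fin n → Option Bool)` with `none` playing the role of `*`,
and its dimension is the number of `*` entries. -/
def faceDim {n : ℕ} (F : Fin n → Option Bool) : ℕ :=
  (Finset.univ.filter (fun p => F p = none)).card

/-- The set of star positions of a face. -/
def stars {n : ℕ} (F : Fin n → Option Bool) : Finset (Fin n) :=
  Finset.univ.filter (fun p => F p = none)

/-- Two faces are compatible (have nonempty intersection in the face lattice)
iff they agree on every coordinate which is fixed in both. -/
def compatible {n : ℕ} (D S : Fin n → Option Bool) : Prop :=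
  ∀ p b b', D p = some b → S p = some b' → b = b'

/-- `dim (D ∩ S) ≥ q` in the face lattice of the `n`-cube (for `q : ℕ`). -/
def meets {n : ℕ} (q : ℕ) (D S : Fin n → Option Bool) : Prop :=
  compatible D S ∧ q ≤ (stars D ∩ stars S).card

/-- The graph `Q(n,k,p,q)`: vertices are the `k`-faces of the `n`-cube, and two
distinct `k`-faces `D`, `F` are adjacent iff there is a `p`-face `S` with
`dim (D ∩ S) ≥ q` and `dim (F ∩ S) ≥ q`. -/
def Q (n k p q : ℕ) : SimpleGraph {D : Fin n → Option Bool // faceDim D = k} where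
  Adj D F := D ≠ F ∧
    ∃ S : Fin n → Option Bool, faceDim S = p ∧ meets q D.1 S ∧ meets q F.1 S
  symm := by
    constructor
    rintro D F ⟨h, S, hS, h1, h2⟩
    exact ⟨Ne.symm h, S, hS, h2, h1⟩
  loopless := by constructor; rintro D ⟨h, -⟩; exact h rfl

/-- The number of shared star coordinates `j = |I_D ∩ I_F|` of two faces. -/
def sharedStars {n : ℕ} (D F : Fin n → Option Bool) : ℕ :=
  (stars D ∩ stars F).card

/-- The number `m` of coordinates outside `I_D ∪ I_F` where `D` and `F`
carry different bits. -/
def mism {n : ℕ} (D F : Fin n → Option Bool) : ℕ :=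
  (Finset.univ.filter (fun p => D p ≠ none ∧ F p ≠ none ∧ D p ≠ F p)).card

/-- The gap function `ρ_q(D,F) = m + 2q - min{q, j}`. -/
def rho {n : ℕ} (q : ℕ) (D F : Fin n → Option Bool) : ℕ :=
  mism D F + 2 * q - min q (sharedStars D F)

/-!
A `p`-face `S` meeting both `D` and `F` in dimension `≥ q` must be free on every coordinate
where `D` and `F` carry different bits, and on at least `q` stars of each of `D` and `F`;
at most `min q j` of these can be shared, so `S` has at least `m + 2q - min q j` stars.
Conversely, choose `q` stars of `D` and `q` stars of `F` sharing `min q j` of them, free these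
together with the `m` mismatches and `p - ρ` further coordinates, and fix every other
coordinate to the bit of `D` (or of `F`).
-/

namespace Finset

variable {α : Type*} [DecidableEq α]

theorem exists_subsets_card_union_le {A B : Finset α} {q : ℕ}
    (hA : q ≤ A.card) (hB : q ≤ B.card) :
    ∃ X ⊆ A, ∃ Y ⊆ B, X.card = q ∧ Y.card = q ∧
      (X ∪ Y).card ≤ 2 * q - min q (A ∩ B).card := by
  obtain ⟨C, hCAB, hC⟩ := exists_subset_card_eq (min_le_right q (A ∩ B).card)
  obtain ⟨X, hCX, hXA, hX⟩ :=
    exists_subsuperset_card_eq (hCAB.trans inter_subset_left) (hC ▸ min_le_left _ _) hA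
  obtain ⟨Y, hCY, hYB, hY⟩ :=
    exists_subsuperset_card_eq (hCAB.trans inter_subset_right) (hC ▸ min_le_left _ _) hB
  have hCXY : C.card ≤ (X ∩ Y).card := card_le_card (subset_inter hCX hCY)
  have hunion := card_union_add_card_inter X Y
  exact ⟨X, hXA, Y, hYB, hX, hY, by omega⟩

theorem exists_superset_card_eq_le_card_inter [Fintype α] {A B M : Finset α} {p q : ℕ}
    (hA : q ≤ A.card) (hB : q ≤ B.card) (hp : p ≤ Fintype.card α)
    (h : M.card + (2 * q - min q (A ∩ B).card) ≤ p) :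
    ∃ T, M ⊆ T ∧ T.card = p ∧ q ≤ (A ∩ T).card ∧ q ≤ (B ∩ T).card := by
  obtain ⟨X, hXA, Y, hYB, hX, hY, hXY⟩ := exists_subsets_card_union_le hA hB
  have hMXY : (M ∪ (X ∪ Y)).card ≤ p := (card_union_le _ _).trans (by omega)
  obtain ⟨T, hT, -, hTp⟩ := exists_subsuperset_card_eq (subset_univ _) hMXY hp
  have hXT : X ⊆ T := fun i hi => hT (by simp [hi])
  have hYT : Y ⊆ T := fun i hi => hT (by simp [hi])
  exact ⟨T, subset_union_left.trans hT, hTp,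
    hX ▸ card_le_card (subset_inter hXA hXT), hY ▸ card_le_card (subset_inter hYB hYT)⟩

end Finset

section Faces

variable {n : ℕ}

theorem faceDim_eq_card_stars (F : Fin n → Option Bool) : faceDim F = (stars F).card := rfl

theorem mem_stars {F : Fin n → Option Bool} {i : Fin n} : i ∈ stars F ↔ F i = none := by
  simp [stars]

def mismatches (D F : Fin n → Option Bool) : Finset (Fin n) :=
  Finset.univ.filter (fun p => D p ≠ none ∧ F p ≠ none ∧ D p ≠ F p)

theorem mism_eq_card_mismatches (D F : Fin n → Option Bool) :
    mism D F = (mismatches D F).card := rfl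

theorem mem_mismatches {D F : Fin n → Option Bool} {i : Fin n} :
    i ∈ mismatches D F ↔ D i ≠ none ∧ F i ≠ none ∧ D i ≠ F i := by
  simp [mismatches]

theorem disjoint_mismatches_stars_left (D F : Fin n → Option Bool) :
    Disjoint (mismatches D F) (stars D) :=
  Finset.disjoint_left.mpr fun _ hM hD => (mem_mismatches.mp hM).1 (mem_stars.mp hD)

theorem disjoint_mismatches_stars_right (D F : Fin n → Option Bool) :
    Disjoint (mismatches D F) (stars F) :=
  Finset.disjoint_left.mpr fun _ hM hF => (mem_mismatches.mp hM).2.1 (mem_stars.mp hF)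

theorem mismatches_subset_stars {D F S : Fin n → Option Bool}
    (hD : compatible D S) (hF : compatible F S) : mismatches D F ⊆ stars S := by
  intro i hi
  obtain ⟨hDi, hFi, hne⟩ := mem_mismatches.mp hi
  obtain ⟨b, hb⟩ := Option.ne_none_iff_exists'.mp hDi
  obtain ⟨b', hb'⟩ := Option.ne_none_iff_exists'.mp hFi
  refine mem_stars.mpr (Option.eq_none_iff_forall_ne_some.mpr fun c hc => hne ?_)
  rw [hb, hb', hD i b c hb hc, hF i b' c hb' hc]

theorem rho_le_card_stars_of_meets {q : ℕ} {D F S : Fin n → Option Bool}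
    (hD : meets q D S) (hF : meets q F S) : rho q D F ≤ (stars S).card := by
  set X := stars D ∩ stars S
  set Y := stars F ∩ stars S
  have hXq : q ≤ X.card := hD.2
  have hYq : q ≤ Y.card := hF.2
  have hXY : (X ∩ Y).card ≤ (stars D ∩ stars F).card :=
    Finset.card_le_card fun i hi => by
      simp only [X, Y, Finset.mem_inter] at hi ⊢
      exact ⟨hi.1.1, hi.2.1⟩
  have hdisj : Disjoint (mismatches D F) (X ∪ Y) := Finset.disjoint_union_right.mpr
    ⟨(disjoint_mismatches_stars_left D F).mono_right Finset.inter_subset_left,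
      (disjoint_mismatches_stars_right D F).mono_right Finset.inter_subset_left⟩
  have hS : (mismatches D F).card + (X ∪ Y).card ≤ (stars S).card := by
    rw [← Finset.card_union_of_disjoint hdisj]
    exact Finset.card_le_card <| Finset.union_subset (mismatches_subset_stars hD.1 hF.1)
      (Finset.union_subset Finset.inter_subset_right Finset.inter_subset_right)
  have hXXY : X.card ≤ (X ∪ Y).card := Finset.card_le_card Finset.subset_union_left
  have hunion := Finset.card_union_add_card_inter X Y
  rw [rho, sharedStars, mism_eq_card_mismatches]
  omega

def fillFace (D F : Fin n → Option Bool) (T : Finset (Fin n)) : Fin n → Option Bool :=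
  fun i => if i ∈ T then none else some ((D i).getD ((F i).getD true))

theorem stars_fillFace (D F : Fin n → Option Bool) (T : Finset (Fin n)) :
    stars (fillFace D F T) = T := by
  ext i
  by_cases hi : i ∈ T <;> simp [mem_stars, fillFace, hi]

theorem compatible_fillFace_left (D F : Fin n → Option Bool) (T : Finset (Fin n)) :
    compatible D (fillFace D F T) := by
  intro i b b' hb hb'
  by_cases hi : i ∈ T <;> simp_all [fillFace]

theorem compatible_fillFace_right {D F : Fin n → Option Bool} {T : Finset (Fin n)}
    (hT : mismatches D F ⊆ T) : compatible F (fillFace D F T) := by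
  intro i b b' hb hb'
  have hi : i ∉ T := fun hi => by simp [fillFace, hi] at hb'
  cases hDi : D i with
  | none => simp_all [fillFace]
  | some c =>
    have hc : c = b := by
      by_contra hcb
      exact hi (hT (mem_mismatches.mpr ⟨by simp [hDi], by simp [hb], by simpa [hDi, hb]⟩))
    simp_all [fillFace]

end Faces

/-- Two distinct `k`-faces `D`, `F` of the `n`-cube are adjacent in
`Q(n,k,p,q)` if and only if `ρ_q(D,F) ≤ p`. -/
theorem stmt_8 (n k p q : ℕ) (hq : q ≤ p) (hp : p ≤ k) (hk : k ≤ n)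
    (D F : {D : Fin n → Option Bool // faceDim D = k}) (hDF : D ≠ F) :
    (Q n k p q).Adj D F ↔ rho q D.1 F.1 ≤ p := by
  have hD : (stars D.1).card = k := D.2
  have hF : (stars F.1).card = k := F.2
  constructor
  · rintro ⟨-, S, hS, hDS, hFS⟩
    exact hS ▸ rho_le_card_stars_of_meets hDS hFS
  · intro hρ
    rw [rho, sharedStars, mism_eq_card_mismatches] at hρ
    obtain ⟨T, hMT, hTp, hDT, hFT⟩ :=
      Finset.exists_superset_card_eq_le_card_inter (hD ▸ hq.trans hp) (hF ▸ hq.trans hp)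
        (by simpa using hp.trans hk) (M := mismatches D.1 F.1) (by omega)
    refine ⟨hDF, fillFace D.1 F.1 T, by rw [faceDim_eq_card_stars, stars_fillFace, hTp],
      ⟨compatible_fillFace_left _ _ _, ?_⟩, ⟨compatible_fillFace_right hMT, ?_⟩⟩ <;>
      rwa [stars_fillFace]
end
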